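/- arXiv:1405.6705 — 2 statements merged into one kernel-verified Lean document; each statement's English description precedes it below -/
import Mathlib

section
/- With the hypotheses of the bimodule lemma (structure constants γ for A∞, C for A, and both compatibility relations ∑_b C_{b₁,b₂}^{b} γ_{b,b₃}^{b'} = ∑_b C_{b₁,b}^{b'} γ_{b₂,b₃}^{b} and ∑_b γ_{b₁,b₂}^{b} C_{b,b₃}^{b'} = ∑_b γ_{b₁,b}^{b'} C_{b₂,b₃}^{b}), and assuming ∑_{d∈D} t_d is the identity of A∞, we have for all b, b' ∈ c: t_b ∘ b' = t_b · ((∑_{d∈D} t_d) ∘ (∑_{d∈D} d)) · t_{b'}, where ∘ is the action t_b ∘ b' = ∑_{b''} C_{b,b'}^{b''} t_{b''} and · is multiplication in A∞. -/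
/-- Lemma 3.2: `t_b ∘ b' = t_b · ((∑_{d∈D} t_d) ∘ (∑_{d∈D} d)) · t_{b'}`. -/
theorem stmt_9 (k : Type*) [CommRing k] (c : Type*) [Fintype c] [DecidableEq c]
    (γ C : c → c → c → k)
    (mulγ mulC : (c → k) → (c → k) → (c → k))
    (hmulγ : ∀ x y : c → k, ∀ b'' : c,
      mulγ x y b'' = ∑ b : c, ∑ b' : c, x b * y b' * γ b b' b'')
    (hmulC : ∀ x y : c → k, ∀ b'' : c,
      mulC x y b'' = ∑ b : c, ∑ b' : c, x b * y b' * C b b' b'')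
    (hassocγ : ∀ x y z : c → k, mulγ (mulγ x y) z = mulγ x (mulγ y z))
    (hassocC : ∀ x y z : c → k, mulC (mulC x y) z = mulC x (mulC y z))
    (compat₁ : ∀ b₁ b₂ b₃ b' : c,
      ∑ b : c, C b₁ b₂ b * γ b b₃ b' = ∑ b : c, C b₁ b b' * γ b₂ b₃ b)
    (compat₂ : ∀ b₁ b₂ b₃ b' : c,
      ∑ b : c, γ b₁ b₂ b * C b b₃ b' = ∑ b : c, γ b₁ b b' * C b₂ b₃ b)
    (act : (c → k) → (c → k) → (c → k))
    (hact : ∀ x a : c → k, ∀ b'' : c,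
      act x a b'' = ∑ b : c, ∑ b' : c, x b * a b' * C b b' b'')
    (D : Finset c)
    (hid : ∀ x : c → k,
      mulγ (∑ d ∈ D, Pi.single d 1) x = x ∧ mulγ x (∑ d ∈ D, Pi.single d 1) = x) :
    ∀ b b' : c,
      act (Pi.single b 1) (Pi.single b' 1) =
        mulγ (mulγ (Pi.single b 1) (act (∑ d ∈ D, Pi.single d 1) (∑ d ∈ D, Pi.single d 1)))
          (Pi.single b' 1) := by
  have L1 : ∀ x y z : c → k, act (mulγ x y) z = mulγ x (act y z) := by
    intro x y z
    funext w
    rw [hact, hmulγ]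
    simp only [hmulγ, hact, Finset.sum_mul, Finset.mul_sum]
    conv_lhs => rw [Finset.sum_comm]
    conv_lhs => enter [2, a]; rw [Finset.sum_comm]
    conv_lhs => enter [2, a, 2, b]; rw [Finset.sum_comm]
    conv_lhs => rw [Finset.sum_comm]
    conv_lhs => enter [2, a]; rw [Finset.sum_comm]
    conv_rhs => enter [2, a]; rw [Finset.sum_comm]
    conv_rhs => enter [2, a, 2, b]; rw [Finset.sum_comm]
    refine Finset.sum_congr rfl fun b₁ _ => Finset.sum_congr rfl fun b₂ _ =>
      Finset.sum_congr rfl fun b₃ _ => ?_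
    calc ∑ b : c, x b₁ * y b₂ * γ b₁ b₂ b * z b₃ * C b b₃ w
        = x b₁ * y b₂ * z b₃ * ∑ b : c, γ b₁ b₂ b * C b b₃ w := by
          rw [Finset.mul_sum]; exact Finset.sum_congr rfl fun _ _ => by ring
      _ = x b₁ * y b₂ * z b₃ * ∑ b : c, γ b₁ b w * C b₂ b₃ b := by rw [compat₂]
      _ = _ := by rw [Finset.mul_sum]; exact Finset.sum_congr rfl fun _ _ => by ring
  have L2 : ∀ x y z : c → k, mulγ (act x y) z = act x (mulγ y z) := by
    intro x y z
    funext w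
    rw [hmulγ, hact]
    simp only [hmulγ, hact, Finset.sum_mul, Finset.mul_sum]
    conv_lhs => rw [Finset.sum_comm]
    conv_lhs => enter [2, a]; rw [Finset.sum_comm]
    conv_lhs => enter [2, a, 2, b]; rw [Finset.sum_comm]
    conv_lhs => rw [Finset.sum_comm]
    conv_lhs => enter [2, a]; rw [Finset.sum_comm]
    conv_rhs => enter [2, a]; rw [Finset.sum_comm]
    conv_rhs => enter [2, a, 2, b]; rw [Finset.sum_comm]
    refine Finset.sum_congr rfl fun b₁ _ => Finset.sum_congr rfl fun b₂ _ =>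
      Finset.sum_congr rfl fun b₃ _ => ?_
    calc ∑ b : c, x b₁ * y b₂ * C b₁ b₂ b * z b₃ * γ b b₃ w
        = x b₁ * y b₂ * z b₃ * ∑ b : c, C b₁ b₂ b * γ b b₃ w := by
          rw [Finset.mul_sum]; exact Finset.sum_congr rfl fun _ _ => by ring
      _ = x b₁ * y b₂ * z b₃ * ∑ b : c, C b₁ b w * γ b₂ b₃ b := by rw [compat₁]
      _ = _ := by rw [Finset.mul_sum]; exact Finset.sum_congr rfl fun _ _ => by ring
  intro b b'
  set e : c → k := ∑ d ∈ D, Pi.single d 1 with he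
  calc act (Pi.single b 1) (Pi.single b' 1)
      = act (Pi.single b 1) (mulγ e (Pi.single b' 1)) := by rw [(hid (Pi.single b' 1)).1]
    _ = mulγ (act (Pi.single b 1) e) (Pi.single b' 1) := (L2 _ _ _).symm
    _ = mulγ (act (mulγ (Pi.single b 1) e) e) (Pi.single b' 1) := by
        rw [(hid (Pi.single b 1)).2]
    _ = mulγ (mulγ (Pi.single b 1) (act e e)) (Pi.single b' 1) := by rw [L1]
end

section
/- Under the hypotheses above, the map b ↦ t_b extends to a k-algebra isomorphism from A to the k-module A∞ equipped with the twisted multiplication x ⋆ y := x · Ψ · y, where Ψ := (∑_{d∈D} t_d) ∘ (∑_{d∈D} d) and · is the multiplication of A∞. That is, A is isomorphic to a 'generalized' version of its asymptotic algebra. -/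
/-- The map `b ↦ t_b` extends to an isomorphism from `A` onto `A∞` equipped with the
twisted multiplication `x ⋆ y := x Ψ y`, where `Ψ = (∑_{d∈D} t_d) ∘ (∑_{d∈D} d)`. -/
theorem stmt_10 (k : Type*) [CommRing k] (c : Type*) [Fintype c] [DecidableEq c]
    (γ C : c → c → c → k)
    (mulγ mulC : (c → k) → (c → k) → (c → k))
    (hmulγ : ∀ x y : c → k, ∀ b'' : c,
      mulγ x y b'' = ∑ b : c, ∑ b' : c, x b * y b' * γ b b' b'')
    (hmulC : ∀ x y : c → k, ∀ b'' : c,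
      mulC x y b'' = ∑ b : c, ∑ b' : c, x b * y b' * C b b' b'')
    (hassocγ : ∀ x y z : c → k, mulγ (mulγ x y) z = mulγ x (mulγ y z))
    (hassocC : ∀ x y z : c → k, mulC (mulC x y) z = mulC x (mulC y z))
    (compat₁ : ∀ b₁ b₂ b₃ b' : c,
      ∑ b : c, C b₁ b₂ b * γ b b₃ b' = ∑ b : c, C b₁ b b' * γ b₂ b₃ b)
    (compat₂ : ∀ b₁ b₂ b₃ b' : c,
      ∑ b : c, γ b₁ b₂ b * C b b₃ b' = ∑ b : c, γ b₁ b b' * C b₂ b₃ b)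
    (act : (c → k) → (c → k) → (c → k))
    (hact : ∀ x a : c → k, ∀ b'' : c,
      act x a b'' = ∑ b : c, ∑ b' : c, x b * a b' * C b b' b'')
    (D : Finset c)
    (hid : ∀ x : c → k,
      mulγ (∑ d ∈ D, Pi.single d 1) x = x ∧ mulγ x (∑ d ∈ D, Pi.single d 1) = x) :
    ∃ φ : (c → k) ≃ₗ[k] (c → k),
      (∀ b : c, φ (Pi.single b 1) = Pi.single b 1) ∧
      ∀ x y : c → k,
        φ (mulC x y) =
          mulγ (mulγ (φ x) (act (∑ d ∈ D, Pi.single d 1) (∑ d ∈ D, Pi.single d 1)))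
            (φ y) := by
  refine ⟨LinearEquiv.refl k (c → k), fun b => rfl, ?_⟩
  intro x y
  simp only [LinearEquiv.refl_apply]
  have he : ∀ p : c, (∑ d ∈ D, Pi.single d (1:k)) p = if p ∈ D then 1 else 0 := by
    intro p
    rw [Finset.sum_apply]
    simp [Pi.single_apply, Finset.sum_ite_eq]
  have hΨ : ∀ b : c,
      act (∑ d ∈ D, Pi.single d 1) (∑ d ∈ D, Pi.single d 1) b
        = ∑ d ∈ D, ∑ d' ∈ D, C d d' b := by
    intro b
    rw [hact]
    simp only [he, ite_mul, one_mul, zero_mul, Finset.sum_ite_irrel,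
      Finset.sum_const_zero, Finset.sum_ite_mem, Finset.univ_inter]
  have hassoc : ∀ a b v b₀ : c,
      ∑ u : c, γ a b u * γ u v b₀ = ∑ w : c, γ b v w * γ a w b₀ := by
    intro a b v b₀
    have h := congrFun (hassocγ (Pi.single a 1) (Pi.single b 1) (Pi.single v 1)) b₀
    simp only [hmulγ, Pi.single_apply, ite_mul, mul_ite, one_mul, mul_one, zero_mul,
      mul_zero, Finset.sum_ite_irrel, Finset.sum_const_zero, Finset.sum_ite_eq',
      Finset.mem_univ, if_true] at h
    exact h
  have hL : ∀ v b : c, ∑ d ∈ D, γ d v b = if b = v then 1 else 0 := by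
    intro v b
    have h := congrFun ((hid (Pi.single v 1)).1) b
    rw [hmulγ] at h
    simp only [he, Pi.single_apply, ite_mul, one_mul, zero_mul, mul_ite, mul_one,
      mul_zero, Finset.sum_ite_irrel, Finset.sum_const_zero, Finset.sum_ite_mem,
      Finset.univ_inter, Finset.sum_ite_eq', Finset.mem_univ, if_true] at h
    exact h
  have hR : ∀ a w : c, ∑ d ∈ D, γ a d w = if w = a then 1 else 0 := by
    intro a w
    have h := congrFun ((hid (Pi.single a 1)).2) w
    rw [hmulγ] at h
    simp only [he, Pi.single_apply, ite_mul, one_mul, zero_mul, mul_ite, mul_one,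
      mul_zero, Finset.sum_ite_irrel, Finset.sum_const_zero, Finset.sum_ite_mem,
      Finset.univ_inter, Finset.sum_ite_eq', Finset.mem_univ, if_true] at h
    exact h
  funext b₀
  have key : ∀ a v : c,
      ∑ u : c, ∑ b : c, ∑ d ∈ D, ∑ d' ∈ D, C d d' b * γ a b u * γ u v b₀
        = C a v b₀ := by
    intro a v
    calc ∑ u : c, ∑ b : c, ∑ d ∈ D, ∑ d' ∈ D, C d d' b * γ a b u * γ u v b₀
        = ∑ b : c, ∑ u : c, ∑ d ∈ D, ∑ d' ∈ D, C d d' b * γ a b u * γ u v b₀ :=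
          Finset.sum_comm
      _ = ∑ b : c, ∑ d ∈ D, ∑ u : c, ∑ d' ∈ D, C d d' b * γ a b u * γ u v b₀ :=
          Finset.sum_congr rfl fun b _ => Finset.sum_comm
      _ = ∑ b : c, ∑ d ∈ D, ∑ d' ∈ D, ∑ u : c, C d d' b * γ a b u * γ u v b₀ :=
          Finset.sum_congr rfl fun b _ => Finset.sum_congr rfl fun d _ =>
            Finset.sum_comm
      _ = ∑ b : c, ∑ d ∈ D, ∑ d' ∈ D, C d d' b * ∑ u : c, γ a b u * γ u v b₀ := by
          refine Finset.sum_congr rfl fun b _ => Finset.sum_congr rfl fun d _ =>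
            Finset.sum_congr rfl fun d' _ => ?_
          rw [Finset.mul_sum]
          exact Finset.sum_congr rfl fun u _ => by ring
      _ = ∑ b : c, ∑ d ∈ D, ∑ d' ∈ D, C d d' b * ∑ w : c, γ b v w * γ a w b₀ := by
          refine Finset.sum_congr rfl fun b _ => Finset.sum_congr rfl fun d _ =>
            Finset.sum_congr rfl fun d' _ => by rw [hassoc]
      _ = ∑ d ∈ D, ∑ d' ∈ D, ∑ b : c, C d d' b * ∑ w : c, γ b v w * γ a w b₀ := by
          rw [Finset.sum_comm]
          exact Finset.sum_congr rfl fun d _ => Finset.sum_comm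
      _ = ∑ d ∈ D, ∑ d' ∈ D, ∑ w : c, (∑ b : c, C d d' b * γ b v w) * γ a w b₀ := by
          refine Finset.sum_congr rfl fun d _ => Finset.sum_congr rfl fun d' _ => ?_
          calc ∑ b : c, C d d' b * ∑ w : c, γ b v w * γ a w b₀
              = ∑ b : c, ∑ w : c, C d d' b * γ b v w * γ a w b₀ := by
                refine Finset.sum_congr rfl fun b _ => ?_
                rw [Finset.mul_sum]
                exact Finset.sum_congr rfl fun w _ => by ring
            _ = ∑ w : c, ∑ b : c, C d d' b * γ b v w * γ a w b₀ := Finset.sum_comm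
            _ = ∑ w : c, (∑ b : c, C d d' b * γ b v w) * γ a w b₀ :=
                Finset.sum_congr rfl fun w _ => (Finset.sum_mul _ _ _).symm
      _ = ∑ d ∈ D, ∑ d' ∈ D, ∑ w : c, (∑ b : c, C d b w * γ d' v b) * γ a w b₀ := by
          refine Finset.sum_congr rfl fun d _ => Finset.sum_congr rfl fun d' _ =>
            Finset.sum_congr rfl fun w _ => by rw [compat₁]
      _ = ∑ d ∈ D, ∑ w : c, ∑ b : c, C d b w * (∑ d' ∈ D, γ d' v b) * γ a w b₀ := by
          refine Finset.sum_congr rfl fun d _ => ?_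
          calc ∑ d' ∈ D, ∑ w : c, (∑ b : c, C d b w * γ d' v b) * γ a w b₀
              = ∑ d' ∈ D, ∑ w : c, ∑ b : c, C d b w * γ d' v b * γ a w b₀ :=
                Finset.sum_congr rfl fun d' _ => Finset.sum_congr rfl fun w _ =>
                  Finset.sum_mul _ _ _
            _ = ∑ w : c, ∑ d' ∈ D, ∑ b : c, C d b w * γ d' v b * γ a w b₀ :=
                Finset.sum_comm
            _ = ∑ w : c, ∑ b : c, ∑ d' ∈ D, C d b w * γ d' v b * γ a w b₀ :=
                Finset.sum_congr rfl fun w _ => Finset.sum_comm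
            _ = ∑ w : c, ∑ b : c, C d b w * (∑ d' ∈ D, γ d' v b) * γ a w b₀ := by
                refine Finset.sum_congr rfl fun w _ => Finset.sum_congr rfl fun b _ => ?_
                rw [Finset.mul_sum, Finset.sum_mul]
      _ = ∑ d ∈ D, ∑ w : c, C d v w * γ a w b₀ := by
          refine Finset.sum_congr rfl fun d _ => Finset.sum_congr rfl fun w _ => ?_
          simp only [hL, mul_ite, mul_one, mul_zero, ite_mul, zero_mul,
            Finset.sum_ite_eq', Finset.mem_univ, if_true]
      _ = ∑ d ∈ D, ∑ w : c, γ a w b₀ * C d v w := by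
          refine Finset.sum_congr rfl fun d _ => Finset.sum_congr rfl fun w _ => by ring
      _ = ∑ d ∈ D, ∑ w : c, γ a d w * C w v b₀ :=
          Finset.sum_congr rfl fun d _ => (compat₂ a d v b₀).symm
      _ = ∑ w : c, ∑ d ∈ D, γ a d w * C w v b₀ := Finset.sum_comm
      _ = ∑ w : c, (∑ d ∈ D, γ a d w) * C w v b₀ :=
          Finset.sum_congr rfl fun w _ => (Finset.sum_mul _ _ _).symm
      _ = C a v b₀ := by
          simp only [hR, ite_mul, one_mul, zero_mul, Finset.sum_ite_eq',
            Finset.mem_univ, if_true]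
  rw [hmulC, hmulγ]
  symm
  calc ∑ u : c, ∑ v : c,
        mulγ x (act (∑ d ∈ D, Pi.single d 1) (∑ d ∈ D, Pi.single d 1)) u * y v * γ u v b₀
      = ∑ u : c, ∑ v : c,
          (∑ a : c, ∑ b : c, x a * (∑ d ∈ D, ∑ d' ∈ D, C d d' b) * γ a b u) * y v * γ u v b₀ := by
        refine Finset.sum_congr rfl fun u _ => Finset.sum_congr rfl fun v _ => ?_
        rw [hmulγ]
        congr 2
        exact Finset.sum_congr rfl fun a _ => Finset.sum_congr rfl fun b _ => by rw [hΨ]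
    _ = ∑ u : c, ∑ v : c, ∑ a : c, ∑ b : c, ∑ d ∈ D, ∑ d' ∈ D,
          x a * y v * (C d d' b * γ a b u * γ u v b₀) := by
        refine Finset.sum_congr rfl fun u _ => Finset.sum_congr rfl fun v _ => ?_
        simp only [Finset.sum_mul, Finset.mul_sum]
        exact Finset.sum_congr rfl fun a _ => Finset.sum_congr rfl fun b _ =>
          Finset.sum_congr rfl fun d _ => Finset.sum_congr rfl fun d' _ => by ring
    _ = ∑ a : c, ∑ v : c, ∑ u : c, ∑ b : c, ∑ d ∈ D, ∑ d' ∈ D,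
          x a * y v * (C d d' b * γ a b u * γ u v b₀) := by
        calc ∑ u : c, ∑ v : c, ∑ a : c, ∑ b : c, ∑ d ∈ D, ∑ d' ∈ D,
              x a * y v * (C d d' b * γ a b u * γ u v b₀)
            = ∑ u : c, ∑ a : c, ∑ v : c, ∑ b : c, ∑ d ∈ D, ∑ d' ∈ D,
              x a * y v * (C d d' b * γ a b u * γ u v b₀) :=
              Finset.sum_congr rfl fun u _ => Finset.sum_comm
          _ = ∑ a : c, ∑ u : c, ∑ v : c, ∑ b : c, ∑ d ∈ D, ∑ d' ∈ D,
              x a * y v * (C d d' b * γ a b u * γ u v b₀) := Finset.sum_comm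
          _ = ∑ a : c, ∑ v : c, ∑ u : c, ∑ b : c, ∑ d ∈ D, ∑ d' ∈ D,
              x a * y v * (C d d' b * γ a b u * γ u v b₀) :=
              Finset.sum_congr rfl fun a _ => Finset.sum_comm
    _ = ∑ a : c, ∑ v : c,
          x a * y v * ∑ u : c, ∑ b : c, ∑ d ∈ D, ∑ d' ∈ D, C d d' b * γ a b u * γ u v b₀ := by
        refine Finset.sum_congr rfl fun a _ => Finset.sum_congr rfl fun v _ => ?_
        simp only [Finset.mul_sum]
    _ = ∑ a : c, ∑ v : c, x a * y v * C a v b₀ := by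
        refine Finset.sum_congr rfl fun a _ => Finset.sum_congr rfl fun v _ => by
          rw [key]
end
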